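/- Let P(m₁,m₂) = {(p₁,p₂,p₃) ∈ ℝ³_{≥0} : p₁ ≤ m₁, p₃ ≤ m₂, p₁+p₂+p₃ ≤ m₁+m₂} be the type A₂ Dyck-path polytope. Then P(m₁, m₂) is a normal lattice polytope: its vertices have integer coordinates, and for every n ≥ 1 the lattice points of nP(m₁,m₂) = P(nm₁, nm₂) coincide with the n-fold Minkowski sum of the lattice points of P(m₁,m₂). -/

import Mathlib

/-!
The polytopes `P(m₁, m₂)` are additive in `(m₁, m₂)`: a greedy coordinate-wise splitting shows
`P(a + c, b + d) = P(a, b) + P(c, d)` over any ordered ring, hence both for the real polytopes and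
for their lattice points. Over `ℤ` this is the integer decomposition property,
`lattice(n • m) = n • lattice(m)`. Over `ℝ`, together with `conv (S + T) = conv S + conv T`, it
reduces integrality of all `P(m₁, m₂)` to the simplices `P(1, 0)`, `P(0, 1)` and `P(0, 0) = {0}`.
-/

open scoped Pointwise

/-- The type `A₂` Dyck-path polytope `P(m₁, m₂) ⊂ ℝ³_{≥0}`. -/
def polyA2 (m₁ m₂ : ℕ) : Set (Fin 3 → ℝ) :=
  {p | (∀ i, 0 ≤ p i) ∧ p 0 ≤ (m₁ : ℝ) ∧ p 2 ≤ (m₂ : ℝ) ∧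
    p 0 + p 1 + p 2 ≤ (m₁ : ℝ) + (m₂ : ℝ)}

/-- The set of lattice points of `P(m₁, m₂)`. -/
def latticeA2 (m₁ m₂ : ℕ) : Set (Fin 3 → ℤ) :=
  {p | (fun i => (p i : ℝ)) ∈ polyA2 m₁ m₂}

def dyckA2 {R : Type*} [Zero R] [Add R] [LE R] (m₁ m₂ : R) : Set (Fin 3 → R) :=
  {p | (∀ i, 0 ≤ p i) ∧ p 0 ≤ m₁ ∧ p 2 ≤ m₂ ∧ p 0 + p 1 + p 2 ≤ m₁ + m₂}

lemma cons_mem_dyckA2_iff {R : Type*} [Zero R] [Add R] [LE R] {x y z m₁ m₂ : R} :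
    ![x, y, z] ∈ dyckA2 m₁ m₂ ↔
      0 ≤ x ∧ 0 ≤ y ∧ 0 ≤ z ∧ x ≤ m₁ ∧ z ≤ m₂ ∧ x + y + z ≤ m₁ + m₂ := by
  simp [dyckA2, Fin.forall_fin_succ, and_assoc]

section Ordered

variable {R : Type*} [CommRing R] [LinearOrder R] [IsStrictOrderedRing R]

lemma dyckA2_zero : dyckA2 (0 : R) 0 = {0} := by
  ext p
  simp only [dyckA2, Set.mem_ofPred_eq, Set.mem_singleton_iff, add_zero]
  constructor
  · rintro ⟨hp, h₀, h₂, hs⟩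
    have := hp 0; have := hp 1; have := hp 2
    ext i; fin_cases i <;> simp <;> linarith
  · rintro rfl
    simp

lemma add_subset_dyckA2_add (a b c d : R) :
    dyckA2 a b + dyckA2 c d ⊆ dyckA2 (a + c) (b + d) := by
  rintro _ ⟨x, ⟨hx, hx₀, hx₂, hxs⟩, y, ⟨hy, hy₀, hy₂, hys⟩, rfl⟩
  refine ⟨fun i => add_nonneg (hx i) (hy i), ?_, ?_, ?_⟩ <;>
    simp only [Pi.add_apply] <;> linarith

lemma le_min_add {p a c : R} (hc : 0 ≤ c) (h : p ≤ a + c) : p ≤ min p a + c := by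
  rw [← min_add_add_right]
  exact le_min (le_add_of_nonneg_right hc) h

/-- Greedy splitting: each coordinate of the first summand takes as much of `p` as its bounds
allow, and the remainder fits into `P(c, d)`. -/
lemma dyckA2_add_subset {a b c d : R} (ha : 0 ≤ a) (hb : 0 ≤ b) (hc : 0 ≤ c) (hd : 0 ≤ d) :
    dyckA2 (a + c) (b + d) ⊆ dyckA2 a b + dyckA2 c d := by
  rintro p ⟨hp, h₀, h₂, hs⟩
  set x₀ := min (p 0) a
  set x₂ := min (p 2) b
  set x₁ := min (p 1) (a + b - x₀ - x₂)
  have hx₀ : p 0 ≤ x₀ + c := le_min_add hc h₀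
  have hx₂ : p 2 ≤ x₂ + d := le_min_add hd h₂
  have hx₁ : p 1 ≤ x₁ + (c + d - (p 0 - x₀) - (p 2 - x₂)) :=
    le_min_add (by linarith) (by linarith)
  have hx_nonneg : 0 ≤ x₀ ∧ 0 ≤ x₂ := ⟨le_min (hp 0) ha, le_min (hp 2) hb⟩
  have hx₁_nonneg : 0 ≤ x₁ :=
    le_min (hp 1) (by linarith [min_le_right (p 0) a, min_le_right (p 2) b])
  have hsum : ![x₀, x₁, x₂] + ![p 0 - x₀, p 1 - x₁, p 2 - x₂] = p := by
    ext i; fin_cases i <;> simp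
  refine ⟨_, cons_mem_dyckA2_iff.2 ⟨?_, ?_, ?_, ?_, ?_, ?_⟩,
    _, cons_mem_dyckA2_iff.2 ⟨?_, ?_, ?_, ?_, ?_, ?_⟩, hsum⟩
  all_goals linarith [min_le_left (p 0) a, min_le_right (p 0) a, min_le_left (p 2) b,
    min_le_right (p 2) b, min_le_left (p 1) (a + b - x₀ - x₂),
    min_le_right (p 1) (a + b - x₀ - x₂)]

lemma dyckA2_add {a b c d : R} (ha : 0 ≤ a) (hb : 0 ≤ b) (hc : 0 ≤ c) (hd : 0 ≤ d) :
    dyckA2 (a + c) (b + d) = dyckA2 a b + dyckA2 c d :=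
  (dyckA2_add_subset ha hb hc hd).antisymm (add_subset_dyckA2_add a b c d)

end Ordered

lemma convex_dyckA2 {𝕜 : Type*} [Field 𝕜] [LinearOrder 𝕜] [IsStrictOrderedRing 𝕜] (m₁ m₂ : 𝕜) :
    Convex 𝕜 (dyckA2 m₁ m₂) := by
  rintro p ⟨hp, hp₀, hp₂, hps⟩ q ⟨hq, hq₀, hq₂, hqs⟩ a b ha hb hab
  obtain rfl : b = 1 - a := by linear_combination hab
  refine ⟨fun i => ?_, ?_, ?_, ?_⟩ <;> simp only [Pi.add_apply, Pi.smul_apply, smul_eq_mul]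
  · exact add_nonneg (mul_nonneg ha (hp i)) (mul_nonneg hb (hq i))
  · nlinarith [mul_le_mul_of_nonneg_left hp₀ ha, mul_le_mul_of_nonneg_left hq₀ hb]
  · nlinarith [mul_le_mul_of_nonneg_left hp₂ ha, mul_le_mul_of_nonneg_left hq₂ hb]
  · nlinarith [mul_le_mul_of_nonneg_left hps ha, mul_le_mul_of_nonneg_left hqs hb]

lemma smul_add_smul_mem_convexHull {𝕜 E : Type*} [Field 𝕜] [LinearOrder 𝕜] [IsStrictOrderedRing 𝕜]
    [AddCommGroup E] [Module 𝕜 E] {s : Set E} {u v : E} (h₀ : 0 ∈ s) (hu : u ∈ s) (hv : v ∈ s)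
    {a b : 𝕜} (ha : 0 ≤ a) (hb : 0 ≤ b) (hab : a + b ≤ 1) : a • u + b • v ∈ convexHull 𝕜 s := by
  have := (convex_convexHull 𝕜 s).sum_mem (t := Finset.univ) (w := ![1 - a - b, a, b])
    (z := ![0, u, v]) (fun i _ => by fin_cases i <;> simp <;> linarith)
    (by simp [Fin.sum_univ_three]; ring)
    (fun i _ => by fin_cases i <;> exact subset_convexHull 𝕜 s (by simpa))
  simpa [Fin.sum_univ_three] using this

lemma polyA2_eq_dyckA2 (m₁ m₂ : ℕ) : polyA2 m₁ m₂ = dyckA2 (m₁ : ℝ) m₂ := rfl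

lemma latticeA2_eq_dyckA2 (m₁ m₂ : ℕ) : latticeA2 m₁ m₂ = dyckA2 (m₁ : ℤ) m₂ := by
  ext p
  simp only [latticeA2, polyA2, dyckA2, Set.mem_ofPred_eq]
  norm_cast

lemma latticeA2_add (a b c d : ℕ) :
    latticeA2 (a + c) (b + d) = latticeA2 a b + latticeA2 c d := by
  simp only [latticeA2_eq_dyckA2, Nat.cast_add]
  exact dyckA2_add (Nat.cast_nonneg a) (Nat.cast_nonneg b) (Nat.cast_nonneg c) (Nat.cast_nonneg d)

lemma polyA2_add (a b c d : ℕ) : polyA2 (a + c) (b + d) = polyA2 a b + polyA2 c d := by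
  simp only [polyA2_eq_dyckA2, Nat.cast_add]
  exact dyckA2_add (Nat.cast_nonneg a) (Nat.cast_nonneg b) (Nat.cast_nonneg c) (Nat.cast_nonneg d)

lemma latticeA2_nsmul (n m₁ m₂ : ℕ) : latticeA2 (n * m₁) (n * m₂) = n • latticeA2 m₁ m₂ := by
  induction n with
  | zero => simp [latticeA2_eq_dyckA2, dyckA2_zero, Set.singleton_zero]
  | succ n ih => rw [succ_nsmul, ← ih, ← latticeA2_add, add_one_mul, add_one_mul]

def realLatticeA2 (m₁ m₂ : ℕ) : Set (Fin 3 → ℝ) :=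
  (fun p i => (p i : ℝ)) '' latticeA2 m₁ m₂

lemma realLatticeA2_add (a b c d : ℕ) :
    realLatticeA2 (a + c) (b + d) = realLatticeA2 a b + realLatticeA2 c d := by
  rw [realLatticeA2, latticeA2_add]
  exact Set.image_add (AddMonoidHom.compLeft (Int.castAddHom ℝ) (Fin 3))

lemma convexHull_realLatticeA2_subset (m₁ m₂ : ℕ) :
    convexHull ℝ (realLatticeA2 m₁ m₂) ⊆ polyA2 m₁ m₂ :=
  convexHull_min (by rintro _ ⟨p, hp, rfl⟩; exact hp) (convex_dyckA2 _ _)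

lemma cons_mem_realLatticeA2 {m₁ m₂ : ℕ} {x y z : ℤ} (h : ![x, y, z] ∈ latticeA2 m₁ m₂) :
    ![(x : ℝ), y, z] ∈ realLatticeA2 m₁ m₂ :=
  ⟨_, h, by ext i; fin_cases i <;> rfl⟩

lemma zero_mem_realLatticeA2 (m₁ m₂ : ℕ) : 0 ∈ realLatticeA2 m₁ m₂ :=
  ⟨0, by simp [latticeA2_eq_dyckA2, dyckA2]; positivity,
    funext fun _ => Int.cast_zero⟩

lemma polyA2_zero_zero : polyA2 0 0 = convexHull ℝ (realLatticeA2 0 0) := by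
  have : realLatticeA2 0 0 = {0} := by
    rw [realLatticeA2, latticeA2_eq_dyckA2, Nat.cast_zero, dyckA2_zero, Set.image_singleton,
      Set.singleton_eq_singleton_iff]
    exact funext fun _ => Int.cast_zero
  simp only [polyA2_eq_dyckA2, Nat.cast_zero, dyckA2_zero, this, convexHull_singleton]

lemma polyA2_one_zero : polyA2 1 0 = convexHull ℝ (realLatticeA2 1 0) := by
  refine subset_antisymm ?_ (convexHull_realLatticeA2_subset 1 0)
  rintro p ⟨hp, -, h₂, hs⟩
  have hp₂ : p 2 = 0 := le_antisymm (by exact_mod_cast h₂) (hp 2)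
  have : p = p 0 • ![1, 0, 0] + p 1 • ![0, 1, 0] := by ext i; fin_cases i <;> simp [hp₂]
  rw [this]
  refine smul_add_smul_mem_convexHull (zero_mem_realLatticeA2 1 0) ?_ ?_ (hp 0) (hp 1)
    (by push_cast at hs; linarith)
  · simpa using cons_mem_realLatticeA2 (x := 1) (y := 0) (z := 0) (by
      rw [latticeA2_eq_dyckA2, cons_mem_dyckA2_iff]; norm_num)
  · simpa using cons_mem_realLatticeA2 (x := 0) (y := 1) (z := 0) (by
      rw [latticeA2_eq_dyckA2, cons_mem_dyckA2_iff]; norm_num)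

lemma polyA2_zero_one : polyA2 0 1 = convexHull ℝ (realLatticeA2 0 1) := by
  refine subset_antisymm ?_ (convexHull_realLatticeA2_subset 0 1)
  rintro p ⟨hp, h₀, -, hs⟩
  have hp₀ : p 0 = 0 := le_antisymm (by exact_mod_cast h₀) (hp 0)
  have : p = p 1 • ![0, 1, 0] + p 2 • ![0, 0, 1] := by ext i; fin_cases i <;> simp [hp₀]
  rw [this]
  refine smul_add_smul_mem_convexHull (zero_mem_realLatticeA2 0 1) ?_ ?_ (hp 1) (hp 2)
    (by push_cast at hs; linarith)
  · simpa using cons_mem_realLatticeA2 (x := 0) (y := 1) (z := 0) (by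
      rw [latticeA2_eq_dyckA2, cons_mem_dyckA2_iff]; norm_num)
  · simpa using cons_mem_realLatticeA2 (x := 0) (y := 0) (z := 1) (by
      rw [latticeA2_eq_dyckA2, cons_mem_dyckA2_iff]; norm_num)

lemma polyA2_add_of_eq_convexHull {a b c d : ℕ}
    (h₁ : polyA2 a b = convexHull ℝ (realLatticeA2 a b))
    (h₂ : polyA2 c d = convexHull ℝ (realLatticeA2 c d)) :
    polyA2 (a + c) (b + d) = convexHull ℝ (realLatticeA2 (a + c) (b + d)) := by
  rw [polyA2_add, h₁, h₂, ← convexHull_add, realLatticeA2_add]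

theorem polyA2_eq_convexHull (m₁ m₂ : ℕ) :
    polyA2 m₁ m₂ = convexHull ℝ (realLatticeA2 m₁ m₂) := by
  induction m₁ with
  | zero =>
    induction m₂ with
    | zero => exact polyA2_zero_zero
    | succ m₂ ih => exact polyA2_add_of_eq_convexHull ih polyA2_zero_one
  | succ m₁ ih => exact polyA2_add_of_eq_convexHull ih polyA2_one_zero

/-- `P(m₁, m₂)` is a normal lattice polytope: it is the convex hull
of its lattice points (so in particular all its vertices are integral), and for
every `n ≥ 1` the lattice points of `nP(m₁,m₂) = P(nm₁, nm₂)` coincide with the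
`n`-fold Minkowski sum of the lattice points of `P(m₁, m₂)`. -/
theorem stmt18 (m₁ m₂ : ℕ) :
    polyA2 m₁ m₂ = convexHull ℝ ((fun p i => ((p i : ℝ))) '' latticeA2 m₁ m₂) ∧
    ∀ n : ℕ, 1 ≤ n →
      latticeA2 (n * m₁) (n * m₂) =
        {y | ∃ f : Fin n → (Fin 3 → ℤ),
          (∀ i, f i ∈ latticeA2 m₁ m₂) ∧ y = ∑ i, f i} := by
  refine ⟨polyA2_eq_convexHull m₁ m₂, fun n _ => ?_⟩
  ext y
  rw [latticeA2_nsmul, Set.mem_nsmul_iff_sum]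
  simp only [eq_comm, Set.mem_ofPred_eq]
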